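/- Suppose G : U → GL(D−2, ℝ) is smooth and block-diagonal of the form G = s·e^{2U₀} ⊕ e^{−2U₀/(D−3)} M where s = ±1, U₀ : U → ℝ is smooth, and M is a smooth (D−3)×(D−3) matrix-valued function with det M = s · det G. Then G satisfies G⁻¹ ∇² G = (G⁻¹ ∇G)² if and only if ∇² U₀ = 0 and M⁻¹ ∇² M = (M⁻¹ ∇M)². -/

import Mathlib

open Matrix

/-- Entrywise partial derivative in coordinate direction `i` of a matrix-valued
function on `ℝ³`. -/
noncomputable def pd {ι : Type} [Fintype ι] [DecidableEq ι] (i : Fin 3)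
    (M : (Fin 3 → ℝ) → Matrix ι ι ℝ) (p : Fin 3 → ℝ) : Matrix ι ι ℝ :=
  Matrix.of fun a b => fderiv ℝ (fun q => M q a b) p (Pi.single i 1)

/-- The equation `G⁻¹ ∇²G = (G⁻¹ ∇G)²` at a point `p`. -/
noncomputable def matEq {ι : Type} [Fintype ι] [DecidableEq ι]
    (G : (Fin 3 → ℝ) → Matrix ι ι ℝ) (p : Fin 3 → ℝ) : Prop :=
  (G p)⁻¹ * (∑ i : Fin 3, pd i (pd i G) p) =
    ∑ i : Fin 3, ((G p)⁻¹ * pd i G p) * ((G p)⁻¹ * pd i G p)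

/-- Smoothness of all entries of a matrix-valued function on a set. -/
def smoothOn {ι : Type} [Fintype ι] [DecidableEq ι]
    (M : (Fin 3 → ℝ) → Matrix ι ι ℝ) (U : Set (Fin 3 → ℝ)) : Prop :=
  ∀ a b, ContDiffOn ℝ (⊤ : ℕ∞) (fun q => M q a b) U

/-! ### Auxiliary scalar derivative machinery -/

noncomputable def dd (i : Fin 3) (g : (Fin 3 → ℝ) → ℝ) (q : Fin 3 → ℝ) : ℝ :=
  fderiv ℝ g q (Pi.single i 1)

lemma sCA {g : (Fin 3 → ℝ) → ℝ} {p : Fin 3 → ℝ} (h : ContDiffAt ℝ (⊤ : ℕ∞) g p) (i : Fin 3) :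
    ContDiffAt ℝ (⊤ : ℕ∞) (dd i g) p :=
  (h.fderiv_right (m := (⊤ : ℕ∞)) (by simp)).clm_apply contDiffAt_const

lemma ev_diff {g : (Fin 3 → ℝ) → ℝ} {p : Fin 3 → ℝ} (h : ContDiffAt ℝ (⊤ : ℕ∞) g p) :
    ∀ᶠ q in nhds p, DifferentiableAt ℝ g q := by
  filter_upwards [(h.of_le (m := 1) (by exact_mod_cast (le_top : (1:ℕ∞) ≤ ⊤))).eventually (by simp)] with q hq
  exact hq.differentiableAt (by simp)

lemma dd_mul {f g : (Fin 3 → ℝ) → ℝ} {q : Fin 3 → ℝ} (i : Fin 3)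
    (hf : DifferentiableAt ℝ f q) (hg : DifferentiableAt ℝ g q) :
    dd i (fun x => f x * g x) q = dd i f q * g q + f q * dd i g q := by
  simp [dd, fderiv_fun_mul hf hg]; ring

lemma dd_congr {f g : (Fin 3 → ℝ) → ℝ} {p : Fin 3 → ℝ} (i : Fin 3)
    (h : f =ᶠ[nhds p] g) : dd i f p = dd i g p := by
  rw [dd, dd, h.fderiv_eq]

lemma dd_const_mul {f : (Fin 3 → ℝ) → ℝ} {q : Fin 3 → ℝ} (i : Fin 3) (a : ℝ)
    (hf : DifferentiableAt ℝ f q) :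
    dd i (fun x => a * f x) q = a * dd i f q := by
  simp [dd, fderiv_const_mul hf a]

lemma dd_exp {f : (Fin 3 → ℝ) → ℝ} {q : Fin 3 → ℝ} (i : Fin 3)
    (hf : DifferentiableAt ℝ f q) :
    dd i (fun x => Real.exp (f x)) q = Real.exp (f q) * dd i f q := by
  rw [dd, fderiv_exp hf]; simp [dd]

lemma dd_add {f g : (Fin 3 → ℝ) → ℝ} {q : Fin 3 → ℝ} (i : Fin 3)
    (hf : DifferentiableAt ℝ f q) (hg : DifferentiableAt ℝ g q) :
    dd i (fun x => f x + g x) q = dd i f q + dd i g q := by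
  rw [dd, fderiv_fun_add hf hg]; simp [dd]

lemma cancel_aux {α : Type*} [AddCommGroup α] (A B Q x y : α) :
    x + Q + A = y + Q + B ↔ A + (x - y) = B := by
  have key : x + Q + A - (y + Q + B) = A + (x - y) - B := by abel
  constructor <;> intro h
  · have h2 := sub_eq_zero.mpr h; rw [key] at h2; exact sub_eq_zero.mp h2
  · have h2 := sub_eq_zero.mpr h; rw [← key] at h2; exact sub_eq_zero.mp h2

/-! ### The scaling lemma -/

lemma matEq_smul_iff {n : Type} [Fintype n] [DecidableEq n]
    {c : (Fin 3 → ℝ) → ℝ} {M : (Fin 3 → ℝ) → Matrix n n ℝ} {p : Fin 3 → ℝ}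
    (hc : ContDiffAt ℝ (⊤ : ℕ∞) c p) (hc0 : c p ≠ 0)
    (hM : ∀ a b, ContDiffAt ℝ (⊤ : ℕ∞) (fun q => M q a b) p) (hMdet : IsUnit (M p).det) :
    matEq (fun q => c q • M q) p ↔
      (M p)⁻¹ * (∑ i : Fin 3, pd i (pd i M) p) +
        ((c p)⁻¹ * ∑ i : Fin 3, dd i (dd i c) p
          - ∑ i : Fin 3, ((c p)⁻¹ * dd i c p) ^ 2) • (1 : Matrix n n ℝ) =
      ∑ i : Fin 3, ((M p)⁻¹ * pd i M p) * ((M p)⁻¹ * pd i M p) := by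
  set N : (Fin 3 → ℝ) → Matrix n n ℝ := fun q => c q • M q with hN
  have h1 : ∀ i : Fin 3, ∀ᶠ q in nhds p,
      pd i N q = dd i c q • M q + c q • pd i M q := by
    intro i
    have hall : ∀ᶠ q in nhds p, ∀ a b, DifferentiableAt ℝ (fun r => M r a b) q :=
      Filter.eventually_all.mpr fun a => Filter.eventually_all.mpr fun b => ev_diff (hM a b)
    filter_upwards [ev_diff hc, hall] with q hq1 hq2
    ext a b
    show dd i (fun r => c r * M r a b) q = _
    rw [dd_mul i hq1 (hq2 a b)]
    simp [pd, dd]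
  have h2 : ∀ i : Fin 3, pd i (pd i N) p
      = dd i (dd i c) p • M p + (2 * dd i c p) • pd i M p + c p • pd i (pd i M) p := by
    intro i
    ext a b
    have he : (fun q => pd i N q a b)
        =ᶠ[nhds p] fun q => dd i c q * M q a b + c q * dd i (fun r => M r a b) q := by
      filter_upwards [h1 i] with q hq
      rw [hq]; simp [pd, dd]
    have hdc := (sCA hc i).differentiableAt (by simp)
    have hdM := (hM a b).differentiableAt (by simp)
    have hddM := (sCA (hM a b) i).differentiableAt (by simp)
    show dd i (fun q => pd i N q a b) p = _
    rw [dd_congr i he, dd_add i (hdc.fun_mul hdM)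
        ((hc.differentiableAt (by simp)).fun_mul hddM),
      dd_mul i hdc hdM, dd_mul i (hc.differentiableAt (by simp)) hddM]
    show dd i (dd i c) p * M p a b + dd i c p * dd i (fun r => M r a b) p
        + (dd i c p * dd i (fun r => M r a b) p
          + c p * dd i (dd i (fun r => M r a b)) p)
        = dd i (dd i c) p * M p a b + 2 * dd i c p * (pd i M p a b)
          + c p * (pd i (pd i M) p a b)
    have e1 : pd i M p a b = dd i (fun r => M r a b) p := rfl
    have e2 : pd i (pd i M) p a b = dd i (dd i (fun r => M r a b)) p := rfl
    rw [e1, e2]; ring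
  have hNp : N p = c p • M p := rfl
  have Ninv : (N p)⁻¹ = (c p)⁻¹ • (M p)⁻¹ := by
    apply Matrix.inv_eq_right_inv
    rw [hNp, Matrix.smul_mul, Matrix.mul_smul, smul_smul,
      Matrix.mul_nonsing_inv _ hMdet, mul_inv_cancel₀ hc0, one_smul]
  have e1 : ∀ i : Fin 3, (N p)⁻¹ * pd i N p
      = ((c p)⁻¹ * dd i c p) • (1 : Matrix n n ℝ) + (M p)⁻¹ * pd i M p := by
    intro i
    rw [Ninv, (h1 i).self_of_nhds, Matrix.mul_add, Matrix.mul_smul, Matrix.mul_smul,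
      Matrix.smul_mul, Matrix.smul_mul, smul_smul, smul_smul,
      Matrix.nonsing_inv_mul _ hMdet, mul_inv_cancel₀ hc0, one_smul, mul_comm (dd i c p)]
  have e2 : ∀ i : Fin 3, (N p)⁻¹ * pd i (pd i N) p
      = ((c p)⁻¹ * dd i (dd i c) p) • (1 : Matrix n n ℝ)
        + (2 * ((c p)⁻¹ * dd i c p)) • ((M p)⁻¹ * pd i M p)
        + (M p)⁻¹ * pd i (pd i M) p := by
    intro i
    rw [Ninv, h2 i, Matrix.mul_add, Matrix.mul_add, Matrix.mul_smul, Matrix.mul_smul,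
      Matrix.mul_smul, Matrix.smul_mul, Matrix.smul_mul, Matrix.smul_mul,
      smul_smul, smul_smul, smul_smul, Matrix.nonsing_inv_mul _ hMdet,
      mul_inv_cancel₀ hc0, one_smul, mul_comm (dd i (dd i c) p),
      show 2 * dd i c p * (c p)⁻¹ = 2 * ((c p)⁻¹ * dd i c p) from by ring]
  have e3 : ∀ i : Fin 3, ((N p)⁻¹ * pd i N p) * ((N p)⁻¹ * pd i N p)
      = (((c p)⁻¹ * dd i c p) ^ 2) • (1 : Matrix n n ℝ)
        + (2 * ((c p)⁻¹ * dd i c p)) • ((M p)⁻¹ * pd i M p)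
        + ((M p)⁻¹ * pd i M p) * ((M p)⁻¹ * pd i M p) := by
    intro i
    rw [e1 i]
    set t := (c p)⁻¹ * dd i c p
    set X := (M p)⁻¹ * pd i M p
    rw [add_mul, mul_add, mul_add, Matrix.smul_mul, Matrix.smul_mul, Matrix.mul_smul,
      smul_smul, one_mul, Matrix.one_mul, ← pow_two]
    rw [Matrix.mul_smul, Matrix.mul_one, two_mul, add_smul]
    abel
  unfold matEq
  rw [Finset.mul_sum]
  rw [Finset.sum_congr rfl fun i _ => e2 i, Finset.sum_congr rfl fun i _ => e3 i,
    Finset.sum_add_distrib, Finset.sum_add_distrib, Finset.sum_add_distrib,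
    Finset.sum_add_distrib, ← Finset.sum_smul, ← Finset.mul_sum, ← Finset.mul_sum,
    ← Finset.sum_smul]
  rw [cancel_aux, sub_smul]

/-! ### The Laplacian of `s · exp (a · g)` -/

lemma lap_exp {c g : (Fin 3 → ℝ) → ℝ} {p : Fin 3 → ℝ} {s a : ℝ} (hs : s ≠ 0)
    (hg : ContDiffAt ℝ (⊤ : ℕ∞) g p) (hc_ev : ∀ q, c q = s * Real.exp (a * g q)) :
    ContDiffAt ℝ (⊤ : ℕ∞) c p ∧ c p ≠ 0 ∧
      ((c p)⁻¹ * ∑ i : Fin 3, dd i (dd i c) p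
        - ∑ i : Fin 3, ((c p)⁻¹ * dd i c p) ^ 2)
      = a * ∑ i : Fin 3, dd i (dd i g) p := by
  have hc : c = fun q => s * Real.exp (a * g q) := funext hc_ev
  subst hc
  have hC : ContDiffAt ℝ (⊤ : ℕ∞) (fun q => s * Real.exp (a * g q)) p :=
    contDiffAt_const.mul ((contDiffAt_const.mul hg).exp)
  have hc0 : s * Real.exp (a * g p) ≠ 0 := mul_ne_zero hs (Real.exp_ne_zero _)
  refine ⟨hC, hc0, ?_⟩
  set c : (Fin 3 → ℝ) → ℝ := fun q => s * Real.exp (a * g q) with hcdef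
  have hev : ∀ i : Fin 3, ∀ᶠ q in nhds p, dd i c q = c q * (a * dd i g q) := by
    intro i
    filter_upwards [ev_diff hg] with q hq
    rw [hcdef]
    rw [dd_const_mul i s ((hq.const_mul a).exp), dd_exp i (hq.const_mul a),
      dd_const_mul i a hq]
    ring
  have hdi : ∀ i : Fin 3, dd i c p = c p * (a * dd i g p) := fun i => (hev i).self_of_nhds
  have hdd : ∀ i : Fin 3, dd i (dd i c) p
      = c p * (a * dd i g p) * (a * dd i g p) + c p * (a * dd i (dd i g) p) := by
    intro i
    have h1 : DifferentiableAt ℝ c p := hC.differentiableAt (by simp)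
    have h2 : DifferentiableAt ℝ (fun q => a * dd i g q) p :=
      ((sCA hg i).differentiableAt (by simp)).const_mul a
    rw [dd_congr i (hev i), dd_mul i h1 h2,
      dd_const_mul i a ((sCA hg i).differentiableAt (by simp)), hdi i]
    try ring
  have hcp : c p ≠ 0 := hc0
  have ht : ∀ i : Fin 3, ((c p)⁻¹ * dd i c p) ^ 2 = (a * dd i g p) ^ 2 := by
    intro i; rw [hdi i, ← mul_assoc, inv_mul_cancel₀ hcp, one_mul]
  have hT : ∀ i : Fin 3, (c p)⁻¹ * dd i (dd i c) p
      = (a * dd i g p) ^ 2 + a * dd i (dd i g) p := by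
    intro i; rw [hdd i]; field_simp; try ring
  rw [Finset.mul_sum, Finset.sum_congr rfl fun i _ => hT i,
    Finset.sum_congr rfl fun i _ => ht i, Finset.sum_add_distrib,
    add_sub_cancel_left, ← Finset.mul_sum]

/-! ### Block diagonal matrices -/

lemma pd_fromBlocks {m n : Type} [Fintype m] [DecidableEq m] [Fintype n] [DecidableEq n]
    (A : (Fin 3 → ℝ) → Matrix m m ℝ) (B : (Fin 3 → ℝ) → Matrix n n ℝ)
    (i : Fin 3) (p : Fin 3 → ℝ) :
    pd i (fun q => fromBlocks (A q) 0 0 (B q)) p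
      = fromBlocks (pd i A p) 0 0 (pd i B p) := by
  ext (a | a) (b | b)
  · rfl
  · show fderiv ℝ (fun q => fromBlocks (A q) 0 0 (B q) (Sum.inl a) (Sum.inr b)) p
        (Pi.single i 1) = (0 : Matrix m n ℝ) a b
    simp [fromBlocks]
  · show fderiv ℝ (fun q => fromBlocks (A q) 0 0 (B q) (Sum.inr a) (Sum.inl b)) p
        (Pi.single i 1) = (0 : Matrix n m ℝ) a b
    simp [fromBlocks]
  · rfl

lemma sum3_fromBlocks {m n : Type} [Fintype m] [DecidableEq m] [Fintype n] [DecidableEq n]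
    (f : Fin 3 → Matrix m m ℝ) (g : Fin 3 → Matrix n n ℝ) :
    ∑ i : Fin 3, fromBlocks (f i) 0 0 (g i)
      = fromBlocks (∑ i : Fin 3, f i) 0 0 (∑ i : Fin 3, g i) := by
  simp [Fin.sum_univ_three, fromBlocks_add]

lemma matEq_fromBlocks {m n : Type} [Fintype m] [DecidableEq m] [Fintype n] [DecidableEq n]
    {A : (Fin 3 → ℝ) → Matrix m m ℝ} {B : (Fin 3 → ℝ) → Matrix n n ℝ} {p : Fin 3 → ℝ}
    (hA : IsUnit (A p).det) (hB : IsUnit (B p).det) :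
    matEq (fun q => fromBlocks (A q) 0 0 (B q)) p ↔ matEq A p ∧ matEq B p := by
  have hpd : ∀ (i : Fin 3) q, pd i (fun q => fromBlocks (A q) 0 0 (B q)) q
      = fromBlocks (pd i A q) 0 0 (pd i B q) := fun i q => pd_fromBlocks A B i q
  have hpd2 : ∀ i : Fin 3, pd i (pd i (fun q => fromBlocks (A q) 0 0 (B q))) p
      = fromBlocks (pd i (pd i A) p) 0 0 (pd i (pd i B) p) := by
    intro i
    have h : pd i (fun q => fromBlocks (A q) 0 0 (B q))
        = fun q => fromBlocks (pd i A q) 0 0 (pd i B q) := funext (hpd i)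
    rw [h, pd_fromBlocks]
  have hFp : (fun q => fromBlocks (A q) 0 0 (B q)) p = fromBlocks (A p) 0 0 (B p) := rfl
  have hinv : (fromBlocks (A p) 0 0 (B p))⁻¹ = fromBlocks (A p)⁻¹ 0 0 (B p)⁻¹ := by
    apply Matrix.inv_eq_right_inv
    rw [fromBlocks_multiply]
    simp [Matrix.mul_nonsing_inv _ hA, Matrix.mul_nonsing_inv _ hB]
  have hsum1 : (∑ i : Fin 3, pd i (pd i fun q => fromBlocks (A q) 0 0 (B q)) p)
      = ∑ i : Fin 3, fromBlocks (pd i (pd i A) p) 0 0 (pd i (pd i B) p) :=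
    Finset.sum_congr rfl fun i _ => hpd2 i
  have hsum2 : (∑ i : Fin 3,
        (fromBlocks (A p)⁻¹ 0 0 (B p)⁻¹ * pd i (fun q => fromBlocks (A q) 0 0 (B q)) p)
          * (fromBlocks (A p)⁻¹ 0 0 (B p)⁻¹ * pd i (fun q => fromBlocks (A q) 0 0 (B q)) p))
      = ∑ i : Fin 3, fromBlocks (((A p)⁻¹ * pd i A p) * ((A p)⁻¹ * pd i A p)) 0 0
          (((B p)⁻¹ * pd i B p) * ((B p)⁻¹ * pd i B p)) := by
    refine Finset.sum_congr rfl fun i _ => ?_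
    rw [hpd i, fromBlocks_multiply, fromBlocks_multiply]
    simp only [Matrix.mul_zero, Matrix.zero_mul, add_zero, zero_add]
  unfold matEq
  rw [hFp, hinv, hsum1, sum3_fromBlocks, hsum2, sum3_fromBlocks, fromBlocks_multiply]
  simp only [Matrix.mul_zero, Matrix.zero_mul, add_zero, zero_add]
  rw [fromBlocks_inj]
  tauto

lemma smul_one_eq_zero_iff (x : ℝ) :
    x • (1 : Matrix (Fin 1) (Fin 1) ℝ) = 0 ↔ x = 0 := by
  constructor
  · intro h
    have := congrFun (congrFun h 0) 0
    simpa using this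
  · intro h; simp [h]

lemma pd_const {ι : Type} [Fintype ι] [DecidableEq ι] (i : Fin 3)
    (C : Matrix ι ι ℝ) (p : Fin 3 → ℝ) : pd i (fun _ => C) p = 0 := by
  ext a b; simp [pd]

lemma pd_const_fun {ι : Type} [Fintype ι] [DecidableEq ι] (i : Fin 3)
    (C : Matrix ι ι ℝ) : pd i (fun _ => C) = fun _ => 0 :=
  funext fun p => pd_const i C p

/-- For `G = s·e^{2U₀} ⊕ e^{−2U₀/(D−3)} M` with `s = ±1` and `det M = s · det G`,
the equation `G⁻¹ ∇²G = (G⁻¹ ∇G)²` holds on `Ω` if and only if `U₀` is harmonic on `Ω`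
and `M` satisfies `M⁻¹ ∇²M = (M⁻¹ ∇M)²` on `Ω`. -/
theorem matEq_block_scalar_iff (D : ℕ) (hD : 5 ≤ D)
    (Ω : Set (Fin 3 → ℝ)) (hΩ : IsOpen Ω)
    (s : ℝ) (hs : s = 1 ∨ s = -1)
    (U₀ : (Fin 3 → ℝ) → ℝ) (hU₀ : ContDiffOn ℝ (⊤ : ℕ∞) U₀ Ω)
    (M : (Fin 3 → ℝ) → Matrix (Fin (D - 3)) (Fin (D - 3)) ℝ)
    (hM : smoothOn M Ω) (hMinv : ∀ p ∈ Ω, (M p).det ≠ 0)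
    (G : (Fin 3 → ℝ) → Matrix (Fin 1 ⊕ Fin (D - 3)) (Fin 1 ⊕ Fin (D - 3)) ℝ)
    (hGdef : ∀ q, G q = Matrix.fromBlocks
      ((s * Real.exp (2 * U₀ q)) • (1 : Matrix (Fin 1) (Fin 1) ℝ)) 0 0
      (Real.exp (-2 * U₀ q / ((D : ℝ) - 3)) • M q))
    (hdetM : ∀ p ∈ Ω, (M p).det = s * (G p).det) :
    (∀ p ∈ Ω, matEq G p) ↔
      ((∀ p ∈ Ω,
        ∑ j : Fin 3,
          fderiv ℝ (fun q => fderiv ℝ U₀ q (Pi.single j 1)) p (Pi.single j 1) = 0) ∧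
       (∀ p ∈ Ω, matEq M p)) := by
  have key : ∀ p ∈ Ω, (matEq G p ↔
      ((∑ j : Fin 3,
          fderiv ℝ (fun q => fderiv ℝ U₀ q (Pi.single j 1)) p (Pi.single j 1) = 0)
        ∧ matEq M p)) := by
    intro p hp
    have hU : ContDiffAt ℝ (⊤ : ℕ∞) U₀ p := hU₀.contDiffAt (hΩ.mem_nhds hp)
    have hMat : ∀ a b, ContDiffAt ℝ (⊤ : ℕ∞) (fun q => M q a b) p :=
      fun a b => (hM a b).contDiffAt (hΩ.mem_nhds hp)
    have hs0 : s ≠ 0 := by rcases hs with h | h <;> rw [h] <;> norm_num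
    have hlap_eq : (∑ j : Fin 3,
        fderiv ℝ (fun q => fderiv ℝ U₀ q (Pi.single j 1)) p (Pi.single j 1))
        = ∑ j : Fin 3, dd j (dd j U₀) p := rfl
    obtain ⟨hc₁, hc₁0, hL₁⟩ := lap_exp (c := fun q => s * Real.exp (2 * U₀ q))
      (a := 2) hs0 hU (fun q => rfl)
    obtain ⟨hc₂, hc₂0, hL₂⟩ := lap_exp (c := fun q => Real.exp (-2 * U₀ q / ((D:ℝ) - 3)))
      (s := 1) (a := -2 / ((D:ℝ) - 3)) one_ne_zero hU
      (fun q => by rw [one_mul]; exact congrArg Real.exp (by ring))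
    set A : (Fin 3 → ℝ) → Matrix (Fin 1) (Fin 1) ℝ :=
      fun r => (s * Real.exp (2 * U₀ r)) • (1 : Matrix (Fin 1) (Fin 1) ℝ) with hA
    set B : (Fin 3 → ℝ) → Matrix (Fin (D-3)) (Fin (D-3)) ℝ :=
      fun r => Real.exp (-2 * U₀ r / ((D:ℝ) - 3)) • M r with hB
    have hGsplit : G = fun q => fromBlocks (A q) 0 0 (B q) := funext hGdef
    have detA : IsUnit (A p).det := by
      rw [isUnit_iff_ne_zero, hA]
      simp only [Matrix.det_smul, Fintype.card_fin, det_one, pow_one, mul_one]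
      exact mul_ne_zero hs0 (Real.exp_ne_zero _)
    have detB : IsUnit (B p).det := by
      rw [isUnit_iff_ne_zero, hB]
      simp only [Matrix.det_smul]
      exact mul_ne_zero (pow_ne_zero _ (Real.exp_ne_zero _)) (hMinv p hp)
    rw [hGsplit, matEq_fromBlocks detA detB, hlap_eq]
    have hAiff : matEq A p ↔ (∑ j : Fin 3, dd j (dd j U₀) p) = 0 := by
      have h := matEq_smul_iff (c := fun q => s * Real.exp (2 * U₀ q))
        (M := fun _ => (1 : Matrix (Fin 1) (Fin 1) ℝ)) hc₁ hc₁0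
        (fun a b => contDiffAt_const) (by simp)
      rw [hL₁] at h
      simp only [pd_const_fun, pd_const, inv_one, Matrix.one_mul, Matrix.mul_zero,
        mul_zero, Finset.sum_const_zero, zero_add, zero_mul] at h
      rw [smul_one_eq_zero_iff] at h
      constructor
      · intro hx
        have h2 := h.mp hx
        linarith
      · intro hx
        exact h.mpr (by rw [hx, mul_zero])
    have hBiff : matEq B p ↔ ((M p)⁻¹ * (∑ i : Fin 3, pd i (pd i M) p)
        + ((-2/((D:ℝ)-3)) * ∑ i : Fin 3, dd i (dd i U₀) p) •
            (1 : Matrix (Fin (D-3)) (Fin (D-3)) ℝ)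
        = ∑ i : Fin 3, ((M p)⁻¹ * pd i M p) * ((M p)⁻¹ * pd i M p)) := by
      have h := matEq_smul_iff (c := fun q => Real.exp (-2 * U₀ q / ((D:ℝ) - 3)))
        (M := M) hc₂ hc₂0 hMat (isUnit_iff_ne_zero.mpr (hMinv p hp))
      rw [hL₂] at h
      exact h
    rw [hAiff, hBiff]
    constructor
    · rintro ⟨h1, h2⟩
      refine ⟨h1, ?_⟩
      rw [h1, mul_zero, zero_smul, add_zero] at h2
      exact h2
    · rintro ⟨h1, h2⟩
      refine ⟨h1, ?_⟩
      rw [h1, mul_zero, zero_smul, add_zero]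
      exact h2
  constructor
  · intro h
    exact ⟨fun p hp => ((key p hp).mp (h p hp)).1, fun p hp => ((key p hp).mp (h p hp)).2⟩
  · rintro ⟨h1, h2⟩ p hp
    exact (key p hp).mpr ⟨h1 p hp, h2 p hp⟩
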